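/- Let Y_1, …, Y_N be independent positive integer-valued random variables with E(1/Y_j) ≤ K for each j, where K is a positive constant. Then E(1/(Y_1 + ⋯ + Y_N)) ≤ K/N. (Proof combines AM–GM: Σ Y_j ≥ N (∏ Y_j)^{1/N}, Jensen's inequality E(Y^{−1/N})^N ≤ E(Y^{−1}), and independence.) -/

import Mathlib

/-!
The harmonic–arithmetic mean inequality (Cauchy–Schwarz in Sedrakyan's form) gives pointwise
`1 / ∑ Yⱼ ≤ (∑ 1 / Yⱼ) / N²`; integrating and using `E(1 / Yⱼ) ≤ K` bounds the expectation by
`N K / N² = K / N`.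
-/

open MeasureTheory ProbabilityTheory Finset

theorem Finset.inv_sum_le_sum_inv_div_card_sq {ι R : Type*} [Field R] [LinearOrder R]
    [IsStrictOrderedRing R] (s : Finset ι) {x : ι → R} (hx : ∀ i ∈ s, 0 < x i) :
    (∑ i ∈ s, x i)⁻¹ ≤ (∑ i ∈ s, (x i)⁻¹) / (#s : R) ^ 2 := by
  rcases s.eq_empty_or_nonempty with rfl | hs
  · simp
  have hcs := sq_sum_div_le_sum_sq_div s (fun _ ↦ (1 : R)) hx
  simp only [sum_const, nsmul_eq_mul, mul_one, one_pow, one_div] at hcs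
  rwa [le_div_iff₀ (by positivity), mul_comm, ← div_eq_mul_inv]

theorem integral_inv_sum_le_div_card {Ω ι : Type*} [MeasurableSpace Ω] (μ : Measure Ω)
    (s : Finset ι) (X : ι → Ω → ℝ) (hX : ∀ i ∈ s, ∀ ω, 0 < X i ω)
    (hint : ∀ i ∈ s, Integrable (fun ω ↦ (X i ω)⁻¹) μ) {K : ℝ}
    (hK : ∀ i ∈ s, ∫ ω, (X i ω)⁻¹ ∂μ ≤ K) :
    ∫ ω, (∑ i ∈ s, X i ω)⁻¹ ∂μ ≤ K / #s := by
  calc ∫ ω, (∑ i ∈ s, X i ω)⁻¹ ∂μ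
      ≤ ∫ ω, (∑ i ∈ s, (X i ω)⁻¹) / (#s : ℝ) ^ 2 ∂μ := by
        refine integral_mono_of_nonneg (ae_of_all _ fun ω ↦ ?_)
          ((integrable_finsetSum s hint).div_const _)
          (ae_of_all _ fun ω ↦ s.inv_sum_le_sum_inv_div_card_sq fun i hi ↦ hX i hi ω)
        exact inv_nonneg.2 (sum_nonneg fun i hi ↦ (hX i hi ω).le)
    _ = (∑ i ∈ s, ∫ ω, (X i ω)⁻¹ ∂μ) / (#s : ℝ) ^ 2 := by
        rw [integral_div, integral_finsetSum s hint]
    _ ≤ (#s * K) / (#s : ℝ) ^ 2 := by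
        gcongr
        simpa using sum_le_sum hK
    _ = K / #s := by
        rcases (#s).eq_zero_or_pos with h | h
        · simp [h]
        · field_simp

theorem expectation_inv_sum_le_general {Ω : Type*} [MeasurableSpace Ω]
    (μ : Measure Ω)
    (N : ℕ) (Y : Fin N → Ω → ℕ)
    (hpos : ∀ j ω, 1 ≤ Y j ω)
    (K : ℝ)
    (hint : ∀ j, Integrable (fun ω => ((Y j ω : ℝ))⁻¹) μ)
    (hKb : ∀ j, ∫ ω, ((Y j ω : ℝ))⁻¹ ∂μ ≤ K) :
    ∫ ω, ((∑ j, Y j ω : ℕ) : ℝ)⁻¹ ∂μ ≤ K / N := by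
  simpa using integral_inv_sum_le_div_card μ univ (fun j ω ↦ (Y j ω : ℝ))
    (fun j _ ω ↦ by exact_mod_cast hpos j ω) (fun j _ ↦ hint j) (fun j _ ↦ hKb j)

/-- If `Y₁,…,Y_N` are independent positive-integer-valued random variables with
`E(1/Yⱼ) ≤ K`, then `E(1/(Y₁ + ⋯ + Y_N)) ≤ K/N`. -/
theorem expectation_inv_sum_le {Ω : Type*} [MeasurableSpace Ω]
    (μ : Measure Ω) [IsProbabilityMeasure μ]
    (N : ℕ) (hN : 1 ≤ N) (Y : Fin N → Ω → ℕ)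
    (hmeas : ∀ j, Measurable (Y j))
    (hpos : ∀ j ω, 1 ≤ Y j ω)
    (hindep : iIndepFun Y μ)
    (K : ℝ) (hK : 0 < K)
    (hint : ∀ j, Integrable (fun ω => ((Y j ω : ℝ))⁻¹) μ)
    (hKb : ∀ j, ∫ ω, ((Y j ω : ℝ))⁻¹ ∂μ ≤ K) :
    ∫ ω, ((∑ j, Y j ω : ℕ) : ℝ)⁻¹ ∂μ ≤ K / N :=
  expectation_inv_sum_le_general μ N Y hpos K hint hKb
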